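/- arXiv:math/0311147 — 2 statements merged into one kernel-verified Lean document; each statement's English description precedes it below -/
import Mathlib

section
/- Let H be a real Hilbert space and let S, T be bounded invertible self-adjoint operators on H such that S − T is compact. Then the intersections E₋(S) ∩ E₊(T) and E₊(S) ∩ E₋(T) of the negative spectral subspace of one operator with the positive spectral subspace of the other are both finite dimensional. -/
/-!
On `E₋(S)` the form `-⟪S u, u⟫` is positive semidefinite, and since `S` is invertible it is in
fact coercive there: Cauchy–Schwarz for this form, applied to `u` and `S u`, gives
`‖S u‖² ≤ ‖S‖ (-⟪S u, u⟫)`, and `‖u‖ ≤ ‖S⁻¹‖ ‖S u‖`. On `E₋(S) ∩ E₊(T)` we also have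
`⟪T u, u⟫ ≥ 0`, so `‖u‖² ≲ ⟪(T - S) u, u⟫ ≤ ‖(S - T) u‖ ‖u‖`: the compact operator `S - T` is
bounded below on this subspace. A compact operator that is bounded below is a uniform embedding,
so it pulls a compact set back to a totally bounded neighbourhood of `0`, and Riesz's theorem
makes its domain finite dimensional. The second intersection follows by exchanging `S` and `T`.
-/

open scoped InnerProductSpace NNReal

theorem FiniteDimensional.of_isCompactOperator_of_isUniformInducing (𝕜 : Type*)
    {E F : Type*} [NontriviallyNormedField 𝕜] [CompleteSpace 𝕜]
    [AddCommGroup E] [Module 𝕜 E] [UniformSpace E] [IsUniformAddGroup E] [T2Space E]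
    [ContinuousSMul 𝕜 E] [UniformSpace F] {f : E → F}
    (hf : IsCompactOperator f) (hfu : IsUniformInducing f) : FiniteDimensional 𝕜 E := by
  obtain ⟨K, hK, hK0⟩ := hf
  exact .of_totallyBounded_nhds_zero 𝕜 hK0 (totallyBounded_preimage hfu hK.totallyBounded)

namespace ContinuousLinearMap

theorem apply_mem_range_of_comp_eq {R M : Type*} [Semiring R] [AddCommMonoid M] [Module R M]
    [TopologicalSpace M] {A P : M →L[R] M} (h : A.comp P = P.comp A) {u : M}
    (hu : u ∈ LinearMap.range (P : M →ₗ[R] M)) : A u ∈ LinearMap.range (P : M →ₗ[R] M) := by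
  obtain ⟨y, rfl⟩ := hu
  exact ⟨A y, (DFunLike.congr_fun h y).symm⟩

variable {H : Type*} [NormedAddCommGroup H] [InnerProductSpace ℝ H]
  {S : H →L[ℝ] H} {W : Submodule ℝ H}

theorem sq_norm_apply_le_opNorm_mul_neg_inner (hS : (S : H →ₗ[ℝ] H).IsSymmetric)
    (hSW : ∀ u ∈ W, S u ∈ W) (hneg : ∀ u ∈ W, ⟪S u, u⟫_ℝ ≤ 0) {u : H} (hu : u ∈ W) :
    ‖S u‖ ^ 2 ≤ ‖S‖ * -⟪S u, u⟫_ℝ := by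
  let B : LinearMap.BilinForm ℝ W :=
    (innerₗ H).compl₁₂ (-(S : H →ₗ[ℝ] H) ∘ₗ W.subtype) W.subtype
  have hB : ∀ x y : W, B x y = -⟪S x, y⟫_ℝ := fun x y => by simp [B]
  have hcs := B.apply_mul_apply_le_of_forall_zero_le
    (fun x => by rw [hB]; exact neg_nonneg.2 (hneg x x.2)) ⟨u, hu⟩ ⟨S u, hSW u hu⟩
  simp only [hB] at hcs
  rw [show ⟪S (S u), u⟫_ℝ = ⟪S u, S u⟫_ℝ from hS (S u) u,
    real_inner_self_eq_norm_sq] at hcs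
  have hSSu : -⟪S (S u), S u⟫_ℝ ≤ ‖S‖ * ‖S u‖ ^ 2 := calc
    -⟪S (S u), S u⟫_ℝ ≤ ‖S (S u)‖ * ‖S u‖ := neg_le.1 (abs_le.1 (abs_real_inner_le_norm _ _)).1
    _ ≤ ‖S‖ * ‖S u‖ * ‖S u‖ := by gcongr; exact S.le_opNorm _
    _ = ‖S‖ * ‖S u‖ ^ 2 := by ring
  have hnn : 0 ≤ -⟪S u, u⟫_ℝ := neg_nonneg.2 (hneg u hu)
  nlinarith [mul_le_mul_of_nonneg_left hSSu hnn, mul_nonneg (norm_nonneg S) hnn]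

theorem sq_norm_le_mul_neg_inner (hS : (S : H →ₗ[ℝ] H).IsSymmetric) {K : ℝ≥0} (hK : AntilipschitzWith K S)
    (hSW : ∀ u ∈ W, S u ∈ W) (hneg : ∀ u ∈ W, ⟪S u, u⟫_ℝ ≤ 0) {u : H} (hu : u ∈ W) :
    ‖u‖ ^ 2 ≤ K ^ 2 * ‖S‖ * -⟪S u, u⟫_ℝ := calc
  ‖u‖ ^ 2 ≤ (K * ‖S u‖) ^ 2 := by gcongr; exact hK.le_mul_norm (map_zero S) u
  _ = K ^ 2 * ‖S u‖ ^ 2 := by ring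
  _ ≤ K ^ 2 * (‖S‖ * -⟪S u, u⟫_ℝ) := by
    gcongr; exact sq_norm_apply_le_opNorm_mul_neg_inner hS hSW hneg hu
  _ = K ^ 2 * ‖S‖ * -⟪S u, u⟫_ℝ := by ring

theorem antilipschitz_sub_comp_subtypeL_inf (hS : (S : H →ₗ[ℝ] H).IsSymmetric) {K : ℝ≥0}
    (hK : AntilipschitzWith K S) (T : H →L[ℝ] H) (hSW : ∀ u ∈ W, S u ∈ W)
    (hneg : ∀ u ∈ W, ⟪S u, u⟫_ℝ ≤ 0) {W' : Submodule ℝ H} (hpos : ∀ u ∈ W', 0 ≤ ⟪T u, u⟫_ℝ) :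
    AntilipschitzWith (K ^ 2 * ‖S‖₊) ((S - T).comp (W ⊓ W').subtypeL) := by
  refine (S - T).comp (W ⊓ W').subtypeL |>.antilipschitz_of_bound fun ⟨u, huW, huW'⟩ => ?_
  change ‖u‖ ≤ (K ^ 2 * ‖S‖₊ : ℝ≥0) * ‖(S - T) u‖
  push_cast [coe_nnnorm]
  have h : ‖u‖ * ‖u‖ ≤ K ^ 2 * ‖S‖ * ‖(S - T) u‖ * ‖u‖ := calc
    ‖u‖ * ‖u‖ = ‖u‖ ^ 2 := by ring
    _ ≤ K ^ 2 * ‖S‖ * -⟪S u, u⟫_ℝ := sq_norm_le_mul_neg_inner hS hK hSW hneg huW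
    _ ≤ K ^ 2 * ‖S‖ * -⟪(S - T) u, u⟫_ℝ := by
      gcongr; rw [sub_apply, inner_sub_left]; linarith [hpos u huW']
    _ ≤ K ^ 2 * ‖S‖ * (‖(S - T) u‖ * ‖u‖) := by
      gcongr; exact neg_le.1 (abs_le.1 (abs_real_inner_le_norm _ _)).1
    _ = K ^ 2 * ‖S‖ * ‖(S - T) u‖ * ‖u‖ := by ring
  rcases (norm_nonneg u).eq_or_lt with hu | hu
  · rw [← hu]; positivity
  · exact le_of_mul_le_mul_right h hu

theorem finiteDimensional_inf_of_isCompactOperator_sub (hS : (S : H →ₗ[ℝ] H).IsSymmetric)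
    (hSinv : IsUnit S)
    {T : H →L[ℝ] H} (hST : IsCompactOperator (S - T)) (hSW : ∀ u ∈ W, S u ∈ W)
    (hneg : ∀ u ∈ W, ⟪S u, u⟫_ℝ ≤ 0) {W' : Submodule ℝ H} (hpos : ∀ u ∈ W', 0 ≤ ⟪T u, u⟫_ℝ) :
    FiniteDimensional ℝ ↥(W ⊓ W') := by
  obtain ⟨U, rfl⟩ := hSinv
  have hK := (ContinuousLinearEquiv.unitsEquiv ℝ H U).antilipschitz
  exact .of_isCompactOperator_of_isUniformInducing ℝ (hST.comp_clm _)
    ((antilipschitz_sub_comp_subtypeL_inf hS hK T hSW hneg hpos).isUniformInducing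
      (ContinuousLinearMap.uniformContinuous _))

end ContinuousLinearMap

theorem stmt_0_general
    {H : Type*} [NormedAddCommGroup H] [InnerProductSpace ℝ H] [CompleteSpace H]
    (S T PS PT : H →L[ℝ] H)
    (hS : IsSelfAdjoint S) (hT : IsSelfAdjoint T)
    (hSinv : IsUnit S) (hTinv : IsUnit T)
    (hcpt : IsCompactOperator (⇑(S - T)))
    (hPScomm : S.comp PS = PS.comp S)
    (hPSneg : ∀ u ∈ LinearMap.range (PS : H →ₗ[ℝ] H), u ≠ 0 → ⟪S u, u⟫_ℝ < 0)
    (hPSpos : ∀ u ∈ LinearMap.ker (PS : H →ₗ[ℝ] H), u ≠ 0 → 0 < ⟪S u, u⟫_ℝ)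
    (hPTcomm : T.comp PT = PT.comp T)
    (hPTneg : ∀ u ∈ LinearMap.range (PT : H →ₗ[ℝ] H), u ≠ 0 → ⟪T u, u⟫_ℝ < 0)
    (hPTpos : ∀ u ∈ LinearMap.ker (PT : H →ₗ[ℝ] H), u ≠ 0 → 0 < ⟪T u, u⟫_ℝ) :
    FiniteDimensional ℝ ↥(LinearMap.range (PS : H →ₗ[ℝ] H) ⊓ LinearMap.ker (PT : H →ₗ[ℝ] H)) ∧
    FiniteDimensional ℝ ↥(LinearMap.ker (PS : H →ₗ[ℝ] H) ⊓ LinearMap.range (PT : H →ₗ[ℝ] H)) := by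
  have nonpos {A : H →L[ℝ] H} {W : Submodule ℝ H} (h : ∀ u ∈ W, u ≠ 0 → ⟪A u, u⟫_ℝ < 0) :
      ∀ u ∈ W, ⟪A u, u⟫_ℝ ≤ 0 := fun u hu =>
    (eq_or_ne u 0).elim (fun hu0 => by simp [hu0]) fun hu0 => (h u hu hu0).le
  have nonneg {A : H →L[ℝ] H} {W : Submodule ℝ H} (h : ∀ u ∈ W, u ≠ 0 → 0 < ⟪A u, u⟫_ℝ) :
      ∀ u ∈ W, 0 ≤ ⟪A u, u⟫_ℝ := fun u hu =>
    (eq_or_ne u 0).elim (fun hu0 => by simp [hu0]) fun hu0 => (h u hu hu0).le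
  have hcpt' : IsCompactOperator (⇑(T - S)) := by simpa using hcpt.neg
  constructor
  · exact ContinuousLinearMap.finiteDimensional_inf_of_isCompactOperator_sub hS.isSymmetric hSinv hcpt
      (fun _ => ContinuousLinearMap.apply_mem_range_of_comp_eq hPScomm) (nonpos hPSneg)
      (nonneg hPTpos)
  · rw [inf_comm]
    exact ContinuousLinearMap.finiteDimensional_inf_of_isCompactOperator_sub hT.isSymmetric hTinv hcpt'
      (fun _ => ContinuousLinearMap.apply_mem_range_of_comp_eq hPTcomm) (nonpos hPTneg)
      (nonneg hPSpos)

/-- For bounded invertible self-adjoint operators `S, T` on a real Hilbert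
space with `S - T` compact, the intersections `E₋(S) ⊓ E₊(T)` and `E₊(S) ⊓ E₋(T)` of the
negative spectral subspace of one with the positive spectral subspace of the other are
finite dimensional.  The spectral subspaces are encoded via the spectral projections
`PS, PT` (orthogonal projections commuting with the operator, on whose range the
operator is negative definite and on whose kernel it is positive definite; for an
invertible self-adjoint operator this uniquely characterizes them):
`E₋(S) = range PS`, `E₊(S) = ker PS`, and similarly for `T`. -/
theorem stmt_0
    {H : Type*} [NormedAddCommGroup H] [InnerProductSpace ℝ H] [CompleteSpace H]
    (S T PS PT : H →L[ℝ] H)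
    (hS : IsSelfAdjoint S) (hT : IsSelfAdjoint T)
    (hSinv : IsUnit S) (hTinv : IsUnit T)
    (hcpt : IsCompactOperator (⇑(S - T)))
    (hPSproj : IsIdempotentElem PS) (hPSsa : IsSelfAdjoint PS)
    (hPScomm : S.comp PS = PS.comp S)
    (hPSneg : ∀ u ∈ LinearMap.range (PS : H →ₗ[ℝ] H), u ≠ 0 → ⟪S u, u⟫_ℝ < 0)
    (hPSpos : ∀ u ∈ LinearMap.ker (PS : H →ₗ[ℝ] H), u ≠ 0 → 0 < ⟪S u, u⟫_ℝ)
    (hPTproj : IsIdempotentElem PT) (hPTsa : IsSelfAdjoint PT)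
    (hPTcomm : T.comp PT = PT.comp T)
    (hPTneg : ∀ u ∈ LinearMap.range (PT : H →ₗ[ℝ] H), u ≠ 0 → ⟪T u, u⟫_ℝ < 0)
    (hPTpos : ∀ u ∈ LinearMap.ker (PT : H →ₗ[ℝ] H), u ≠ 0 → 0 < ⟪T u, u⟫_ℝ) :
    FiniteDimensional ℝ ↥(LinearMap.range (PS : H →ₗ[ℝ] H) ⊓ LinearMap.ker (PT : H →ₗ[ℝ] H)) ∧
    FiniteDimensional ℝ ↥(LinearMap.ker (PS : H →ₗ[ℝ] H) ⊓ LinearMap.range (PT : H →ₗ[ℝ] H)) :=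
  stmt_0_general S T PS PT hS hT hSinv hTinv hcpt hPScomm hPSneg hPSpos hPTcomm hPTneg hPTpos
end

section
/- Let λ : [t₀−η, t₀+η] → ℝ be a continuous (piecewise smooth) real-valued function with λ(t₀±η) ≠ 0, and let D = [t₀−η, t₀+η] × [−1,1] ⊂ ℂ with boundary ∂D oriented counterclockwise. Then (1/2πi)∮_{∂D} d(λ(t)+is)/(λ(t)+is) equals: 0 if λ(t₀−η)·λ(t₀+η) > 0; +1 if λ(t₀−η) < 0 < λ(t₀+η); and −1 if λ(t₀+η) < 0 < λ(t₀−η). -/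
open Complex Real

-- derivative of s ↦ (c + I*s : ℂ)
lemma hd_lin (c : ℝ) (s : ℝ) :
    HasDerivAt (fun s : ℝ => (c : ℂ) + Complex.I * (s : ℝ)) Complex.I s := by
  have h0 : HasDerivAt (fun s : ℝ => ((s : ℝ) : ℂ)) 1 s := (hasDerivAt_id s).ofReal_comp
  simpa using ((h0.const_mul Complex.I).const_add (c : ℂ))

lemma lin_ne (c : ℝ) (hc : c ≠ 0) (s : ℝ) : (c : ℂ) + Complex.I * (s : ℝ) ≠ 0 := by
  intro h
  have := congrArg Complex.re h
  simp at this
  exact hc this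

-- FTC value of the side integral via arctan antiderivative
lemma aux_s (c : ℝ) (hc : c ≠ 0) :
    (∫ s in (-1:ℝ)..1, Complex.I / ((c : ℂ) + Complex.I * (s : ℝ)))
      = 2 * (Real.arctan (1/c) : ℂ) * Complex.I := by
  have key : ∀ s : ℝ, HasDerivAt
      (fun s : ℝ => ((Real.log (s^2 + c^2) / 2 : ℝ) : ℂ) + (Real.arctan (s/c) : ℝ) * Complex.I)
      (Complex.I / ((c : ℂ) + Complex.I * (s : ℝ))) s := by
    intro s
    have hq : s^2 + c^2 ≠ 0 := by positivity
    have h1 : HasDerivAt (fun s : ℝ => Real.log (s^2 + c^2) / 2) (s / (s^2 + c^2)) s := by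
      have hp : HasDerivAt (fun s : ℝ => s^2 + c^2) (2*s) s := by
        simpa using ((hasDerivAt_pow 2 s).add_const (c^2))
      have := ((Real.hasDerivAt_log hq).comp s hp).div_const 2
      refine this.congr_deriv ?_
      field_simp
    have h2 : HasDerivAt (fun s : ℝ => Real.arctan (s/c)) (c / (s^2 + c^2)) s := by
      have hd : HasDerivAt (fun s : ℝ => s/c) (1/c) s := (hasDerivAt_id s).div_const c
      have := (Real.hasDerivAt_arctan (s/c)).comp s hd
      refine this.congr_deriv ?_
      field_simp
      ring
    have h3 := (h1.ofReal_comp).add ((h2.ofReal_comp).mul_const Complex.I)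
    refine h3.congr_deriv ?_
    symm
    have hqC : ((s:ℂ)^2 + (c:ℂ)^2) ≠ 0 := by
      intro h
      apply hq
      have := congrArg Complex.re h
      simpa [Complex.add_re, Complex.ofReal_re, ← Complex.ofReal_pow] using this
    rw [div_eq_iff (lin_ne c hc s)]
    push_cast
    field_simp
    ring_nf
    linear_combination (-(s:ℂ)*(c:ℂ)) * Complex.I_sq
  have hcont : Continuous (fun s : ℝ => Complex.I / ((c : ℂ) + Complex.I * (s : ℝ))) := by
    apply Continuous.div continuous_const (by continuity) (lin_ne c hc)
  have := intervalIntegral.integral_eq_sub_of_hasDerivAt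
    (fun s _ => key s) (hcont.intervalIntegrable (-1) 1)
  rw [this]
  have harc : Real.arctan ((-1)/c) = - Real.arctan (1/c) := by
    rw [neg_div, Real.arctan_neg]
  rw [harc]
  push_cast
  ring_nf

-- the horizontal-side integrals
lemma aux_t (lam : ℝ → ℝ) (hlam : ContDiff ℝ 1 lam) (a b : ℝ) (c : ℂ) (hc : c.im ≠ 0) :
    (∫ t in a..b, (Complex.ofReal (deriv lam t)) / ((lam t : ℂ) + c))
      = Complex.log ((lam b : ℂ) + c) - Complex.log ((lam a : ℂ) + c) := by
  have hdl : Continuous (deriv lam) := hlam.continuous_deriv le_rfl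
  have hne : ∀ t : ℝ, ((lam t : ℂ) + c) ≠ 0 := by
    intro t h
    have := congrArg Complex.im h
    simp at this
    exact hc this
  have key : ∀ t : ℝ, HasDerivAt (fun t : ℝ => Complex.log ((lam t : ℂ) + c))
      ((Complex.ofReal (deriv lam t)) / ((lam t : ℂ) + c)) t := by
    intro t
    have h1 : HasDerivAt lam (deriv lam t) t :=
      ((hlam.differentiable one_ne_zero) t).hasDerivAt
    have h2 : HasDerivAt (fun t : ℝ => ((lam t : ℂ) + c)) ((deriv lam t : ℝ) : ℂ) t :=
      (h1.ofReal_comp).add_const c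
    have hsl : ((lam t : ℂ) + c) ∈ Complex.slitPlane := by
      rw [Complex.mem_slitPlane_iff]
      right
      simpa using hc
    have h3 := (Complex.hasDerivAt_log hsl).comp t h2
    exact h3.congr_deriv (by rw [div_eq_inv_mul])
  have hcont : Continuous (fun t : ℝ => (Complex.ofReal (deriv lam t)) / ((lam t : ℂ) + c)) := by
    apply Continuous.div (Complex.continuous_ofReal.comp hdl)
      ((Complex.continuous_ofReal.comp hlam.continuous).add continuous_const) hne
  exact intervalIntegral.integral_eq_sub_of_hasDerivAt (fun t _ => key t)
    (hcont.intervalIntegrable a b)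

-- key: the difference of logs across the branch
lemma log_diff (c : ℝ) (hc : c ≠ 0) :
    Complex.log ((c : ℂ) + Complex.I) - Complex.log ((c : ℂ) - Complex.I)
      = 2 * (Real.arctan (1/c) : ℂ) * Complex.I
        + (if c < 0 then 2 * (Real.pi : ℂ) * Complex.I else 0) := by
  rcases hc.lt_or_gt with h | h
  · -- c < 0 : use antiderivative log(-(c+Is))
    have key : ∀ s : ℝ, HasDerivAt (fun s : ℝ => Complex.log (-((c : ℂ) + Complex.I * (s : ℝ))))
        (Complex.I / ((c : ℂ) + Complex.I * (s : ℝ))) s := by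
      intro s
      have h2 : HasDerivAt (fun s : ℝ => -((c : ℂ) + Complex.I * (s : ℝ))) (-Complex.I) s :=
        (hd_lin c s).neg
      have hsl : -((c : ℂ) + Complex.I * (s : ℝ)) ∈ Complex.slitPlane := by
        rw [Complex.mem_slitPlane_iff]
        left
        simp [h]
      have h3 := (Complex.hasDerivAt_log hsl).comp s h2
      refine h3.congr_deriv ?_
      symm
      rw [inv_neg, neg_mul, mul_neg, neg_neg, div_eq_mul_inv]
      exact mul_comm _ _
    have hcont : Continuous (fun s : ℝ => Complex.I / ((c : ℂ) + Complex.I * (s : ℝ))) :=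
      Continuous.div continuous_const (by continuity) (lin_ne c hc)
    have hftc := intervalIntegral.integral_eq_sub_of_hasDerivAt
      (fun s (_ : s ∈ Set.uIcc (-1:ℝ) 1) => key s) (hcont.intervalIntegrable (-1) 1)
    rw [aux_s c hc] at hftc
    -- hftc : 2 arctan(1/c) I = log(-(c+I)) - log(-(c-I))
    have hrw1 : -((c : ℂ) + Complex.I * ((1:ℝ) : ℂ)) = -((c : ℂ) + Complex.I) := by
      push_cast; ring
    have hrw2 : -((c : ℂ) + Complex.I * ((-1:ℝ) : ℂ)) = -((c : ℂ) - Complex.I) := by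
      push_cast; ring
    rw [hrw1, hrw2] at hftc
    have e1 : Complex.log ((c : ℂ) + Complex.I)
        = Complex.log (-((c : ℂ) + Complex.I)) + (Real.pi : ℂ) * Complex.I := by
      have him : (0:ℝ) < ((c : ℂ) + Complex.I).im := by simp
      have harg := Complex.arg_neg_eq_arg_sub_pi_of_im_pos him
      apply Complex.ext
      · simp only [Complex.add_re, Complex.log_re, Complex.mul_re, Complex.ofReal_re,
          Complex.I_re, Complex.ofReal_im, Complex.I_im]
        rw [norm_neg]
        ring
      · simp only [Complex.add_im, Complex.log_im, Complex.mul_im, Complex.ofReal_re,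
          Complex.I_im, Complex.ofReal_im, Complex.I_re]
        rw [harg]
        ring
    have e2 : Complex.log ((c : ℂ) - Complex.I)
        = Complex.log (-((c : ℂ) - Complex.I)) - (Real.pi : ℂ) * Complex.I := by
      have him : ((c : ℂ) - Complex.I).im < 0 := by simp
      have harg := Complex.arg_neg_eq_arg_add_pi_of_im_neg him
      apply Complex.ext
      · simp only [Complex.sub_re, Complex.log_re, Complex.mul_re, Complex.ofReal_re,
          Complex.I_re, Complex.ofReal_im, Complex.I_im]
        rw [norm_neg]
        ring
      · simp only [Complex.sub_im, Complex.log_im, Complex.mul_im, Complex.ofReal_re,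
          Complex.I_im, Complex.ofReal_im, Complex.I_re]
        rw [harg]
        ring
    rw [if_pos h, e1, e2]
    linear_combination -hftc
  · -- 0 < c : log(c+Is) itself works
    have key : ∀ s : ℝ, HasDerivAt (fun s : ℝ => Complex.log ((c : ℂ) + Complex.I * (s : ℝ)))
        (Complex.I / ((c : ℂ) + Complex.I * (s : ℝ))) s := by
      intro s
      have hsl : ((c : ℂ) + Complex.I * (s : ℝ)) ∈ Complex.slitPlane := by
        rw [Complex.mem_slitPlane_iff]
        left
        simp [h]
      have h3 := (Complex.hasDerivAt_log hsl).comp s (hd_lin c s)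
      have hne := lin_ne c hc s
      refine h3.congr_deriv ?_
      symm
      field_simp
    have hcont : Continuous (fun s : ℝ => Complex.I / ((c : ℂ) + Complex.I * (s : ℝ))) :=
      Continuous.div continuous_const (by continuity) (lin_ne c hc)
    have hftc := intervalIntegral.integral_eq_sub_of_hasDerivAt
      (fun s (_ : s ∈ Set.uIcc (-1:ℝ) 1) => key s) (hcont.intervalIntegrable (-1) 1)
    rw [aux_s c hc] at hftc
    rw [if_neg (not_lt.mpr h.le)]
    have e1 : ((c : ℂ) + Complex.I * ((1:ℝ) : ℂ)) = (c : ℂ) + Complex.I := by push_cast; ring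
    have e2 : ((c : ℂ) + Complex.I * ((-1:ℝ) : ℂ)) = (c : ℂ) - Complex.I := by push_cast; ring
    rw [e1, e2] at hftc
    linear_combination -hftc


/-- For a `C¹` function `λ` with `λ(t₀±η) ≠ 0`, the contour integral
`(1/2πi)∮_{∂D} d(λ(t)+is)/(λ(t)+is)` over the boundary of the rectangle
`D = [t₀−η,t₀+η] × [−1,1]` (traversed counterclockwise: bottom side `s = −1` left to
right, right side, top side right to left, left side) equals `0` if
`λ(t₀−η)·λ(t₀+η) > 0`, `+1` if `λ(t₀−η) < 0 < λ(t₀+η)`, and `−1` if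
`λ(t₀+η) < 0 < λ(t₀−η)`. -/
theorem stmt_12
    (t₀ η : ℝ) (hη : 0 < η) (lam : ℝ → ℝ) (hlam : ContDiff ℝ 1 lam)
    (hm : lam (t₀ - η) ≠ 0) (hp : lam (t₀ + η) ≠ 0) :
    (1 / (2 * (Real.pi : ℂ) * Complex.I)) *
      ((∫ t in (t₀ - η)..(t₀ + η), (Complex.ofReal (deriv lam t)) / ((lam t : ℂ) - Complex.I))
        + (∫ s in (-1:ℝ)..1, Complex.I / ((lam (t₀ + η) : ℂ) + Complex.I * (s : ℂ)))
        - (∫ t in (t₀ - η)..(t₀ + η), (Complex.ofReal (deriv lam t)) / ((lam t : ℂ) + Complex.I))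
        - (∫ s in (-1:ℝ)..1, Complex.I / ((lam (t₀ - η) : ℂ) + Complex.I * (s : ℂ)))) =
    if 0 < lam (t₀ - η) * lam (t₀ + η) then 0
    else if 0 < lam (t₀ + η) then 1 else -1 := by
  have key1 : (∫ t in (t₀ - η)..(t₀ + η),
        (Complex.ofReal (deriv lam t)) / ((lam t : ℂ) - Complex.I))
      = Complex.log ((lam (t₀ + η) : ℂ) - Complex.I)
        - Complex.log ((lam (t₀ - η) : ℂ) - Complex.I) := by
    have := aux_t lam hlam (t₀ - η) (t₀ + η) (-Complex.I) (by simp)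
    simpa [sub_eq_add_neg] using this
  have key2 := aux_t lam hlam (t₀ - η) (t₀ + η) Complex.I (by simp)
  rw [key1, key2, aux_s _ hp, aux_s _ hm]
  have hd1 := log_diff (lam (t₀ - η)) hm
  have hd2 := log_diff (lam (t₀ + η)) hp
  have hπ : (Real.pi : ℂ) ≠ 0 := by exact_mod_cast Real.pi_ne_zero
  have h2πI : (2 * (Real.pi : ℂ) * Complex.I) ≠ 0 := by
    simp [hπ, Complex.I_ne_zero]
  set x : ℂ := ((Real.arctan (1 / lam (t₀ - η)) : ℝ) : ℂ) with hx
  set y : ℂ := ((Real.arctan (1 / lam (t₀ + η)) : ℝ) : ℂ) with hy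
  rcases hm.lt_or_gt with ha | ha <;> rcases hp.lt_or_gt with hb | hb
  · rw [if_pos (mul_pos_of_neg_of_neg ha hb)]
    rw [if_pos ha] at hd1
    rw [if_pos hb] at hd2
    field_simp
    linear_combination hd1 - hd2
  · rw [if_neg (mul_neg_of_neg_of_pos ha hb).not_gt, if_pos hb]
    rw [if_pos ha] at hd1
    rw [if_neg (not_lt.mpr hb.le)] at hd2
    field_simp
    linear_combination hd1 - hd2
  · rw [if_neg (mul_neg_of_pos_of_neg ha hb).not_gt, if_neg (not_lt.mpr hb.le)]
    rw [if_neg (not_lt.mpr ha.le)] at hd1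
    rw [if_pos hb] at hd2
    field_simp
    linear_combination hd1 - hd2
  · rw [if_pos (mul_pos ha hb)]
    rw [if_neg (not_lt.mpr ha.le)] at hd1
    rw [if_neg (not_lt.mpr hb.le)] at hd2
    field_simp
    linear_combination hd1 - hd2
end
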